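/- Let $p_1,\dots,p_r$ and $q_1,\dots,q_r$ be integers, and define $P_1 = p_1$ and for $i \geq 2$, $P_i = p_i + q_i \sum_{\alpha=1}^{i-1} p_\alpha \prod_{\beta=\alpha+1}^{i-1} q_\beta \prod_{\beta=\alpha}^{i-1} q_\beta$. Then $P_1 \prod_{i=2}^r q_i - q_1 (P_1 - 1) \prod_{i=2}^r q_i - \sum_{i=2}^r P_i (q_i - 1) \prod_{j=i+1}^r q_j = B_r - A_r$, where $A_r = \sum_{\alpha=1}^{r} p_\alpha \prod_{\beta=\alpha+1}^{r} q_\beta \prod_{\beta=\alpha}^{r} q_\beta$ and $B_r = \sum_{\alpha=1}^r p_\alpha \prod_{\beta=\alpha+1}^r q_\beta + \prod_{\alpha=1}^r q_\alpha$. -/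

import Mathlib

/-- `A p q r = ∑_{α=1}^{r} p_α (∏_{β=α+1}^{r} q_β)(∏_{β=α}^{r} q_β)`. -/
def iterA (p q : ℕ → ℤ) (r : ℕ) : ℤ :=
  ∑ α ∈ Finset.Icc 1 r,
    p α * (∏ β ∈ Finset.Icc (α + 1) r, q β) * (∏ β ∈ Finset.Icc α r, q β)

/-- `B p q r = ∑_{α=1}^{r} p_α ∏_{β=α+1}^{r} q_β + ∏_{α=1}^{r} q_α`. -/
def iterB (p q : ℕ → ℤ) (r : ℕ) : ℤ :=
  (∑ α ∈ Finset.Icc 1 r, p α * ∏ β ∈ Finset.Icc (α + 1) r, q β) +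
    ∏ α ∈ Finset.Icc 1 r, q α

/-!
Every quantity involved satisfies a first-order recursion in `r`: appending the cable
`(p_{r+1}, q_{r+1})` gives `B_{r+1} = q B_r + p`, `A_{r+1} = q² A_r + p q` and
`χ_{r+1} = q χ_r - P_{r+1} (q - 1)` (with `q = q_{r+1}`, `p = p_{r+1}`), while the defining
formula of `P_{r+1}` is exactly `p + q A_r`. Substituting, `χ_{r+1} - (B_{r+1} - A_{r+1})`
is `q` times `χ_r - (B_r - A_r)`, and the base case `r = 1` is `P_1 = p_1`.
-/

open Finset

lemma sum_mul_prod_Icc_succ_top {R : Type*} [CommSemiring R] (f q : ℕ → R) (a r : ℕ) :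
    ∑ i ∈ Icc a r, f i * ∏ j ∈ Icc (i + 1) (r + 1), q j
      = q (r + 1) * ∑ i ∈ Icc a r, f i * ∏ j ∈ Icc (i + 1) r, q j := by
  rw [mul_sum]
  refine sum_congr rfl fun i hi => ?_
  rw [prod_Icc_succ_top (by grind)]
  ring

lemma iterA_succ (p q : ℕ → ℤ) (r : ℕ) :
    iterA p q (r + 1) = q (r + 1) * q (r + 1) * iterA p q r + p (r + 1) * q (r + 1) := by
  have summand_succ : ∀ α ∈ Icc 1 r,
      p α * (∏ β ∈ Icc (α + 1) (r + 1), q β) * (∏ β ∈ Icc α (r + 1), q β)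
        = q (r + 1) * q (r + 1) *
          (p α * (∏ β ∈ Icc (α + 1) r, q β) * (∏ β ∈ Icc α r, q β)) := by
    intro α hα
    rw [prod_Icc_succ_top (by grind), prod_Icc_succ_top (by grind)]
    ring
  rw [iterA, iterA, sum_Icc_succ_top (by omega), sum_congr rfl summand_succ, ← mul_sum,
    Icc_eq_empty_of_lt (lt_add_one (r + 1)), prod_empty, Icc_self, prod_singleton]
  ring

lemma iterB_succ (p q : ℕ → ℤ) (r : ℕ) :
    iterB p q (r + 1) = q (r + 1) * iterB p q r + p (r + 1) := by
  rw [iterB, iterB, sum_Icc_succ_top (Nat.le_add_left 1 r), sum_mul_prod_Icc_succ_top,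
    prod_Icc_succ_top (Nat.le_add_left 1 r), Icc_eq_empty_of_lt (lt_add_one (r + 1)), prod_empty]
  ring

/-- The Bennequin–Williams formula for `χ(K̆_r)`. -/
def seifertEulerChar (P q : ℕ → ℤ) (r : ℕ) : ℤ :=
  P 1 * (∏ i ∈ Icc 2 r, q i)
    - q 1 * (P 1 - 1) * (∏ i ∈ Icc 2 r, q i)
    - ∑ i ∈ Icc 2 r, P i * (q i - 1) * ∏ j ∈ Icc (i + 1) r, q j

lemma seifertEulerChar_succ (P q : ℕ → ℤ) {r : ℕ} (hr : 1 ≤ r) :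
    seifertEulerChar P q (r + 1)
      = q (r + 1) * seifertEulerChar P q r - P (r + 1) * (q (r + 1) - 1) := by
  rw [seifertEulerChar, seifertEulerChar, prod_Icc_succ_top (by omega),
    sum_Icc_succ_top (by omega), sum_mul_prod_Icc_succ_top,
    Icc_eq_empty_of_lt (lt_add_one (r + 1)), prod_empty]
  ring

theorem stmt5 (p q P : ℕ → ℤ) (r : ℕ) (hr : 1 ≤ r)
    (hP1 : P 1 = p 1)
    (hP : ∀ i : ℕ, 2 ≤ i →
      P i = p i + q i * ∑ α ∈ Finset.Icc 1 (i - 1),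
        p α * (∏ β ∈ Finset.Icc (α + 1) (i - 1), q β) *
          (∏ β ∈ Finset.Icc α (i - 1), q β)) :
    P 1 * (∏ i ∈ Finset.Icc 2 r, q i)
      - q 1 * (P 1 - 1) * (∏ i ∈ Finset.Icc 2 r, q i)
      - ∑ i ∈ Finset.Icc 2 r, P i * (q i - 1) * ∏ j ∈ Finset.Icc (i + 1) r, q j
    = iterB p q r - iterA p q r := by
  change seifertEulerChar P q r = _
  induction r, hr using Nat.le_induction with
  | base =>
    simp only [seifertEulerChar, iterA, iterB, Nat.reduceAdd, Icc_self, sum_singleton,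
      prod_singleton, Icc_eq_empty_of_lt one_lt_two, prod_empty, sum_empty, hP1]
    ring
  | succ r hr ih =>
    have hP_succ : P (r + 1) = p (r + 1) + q (r + 1) * iterA p q r := hP (r + 1) (by omega)
    rw [seifertEulerChar_succ P q hr, iterA_succ, iterB_succ, hP_succ]
    linear_combination q (r + 1) * ih
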